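/- arXiv:1806.09426 — 2 statements merged into one kernel-verified Lean document; each statement's English description precedes it below -/
import Mathlib

section
/- Given an ε-approximate Nash equilibrium (x, y) of a game (R, C) with payoffs in [0,1], the strategy profile (x', y') obtained by removing the probability mass from pure strategies outside √ε-BR₁(y) (respectively √ε-BR₂(x)) and redistributing it uniformly over √ε-BR₁(y) (resp. √ε-BR₂(x)) is a 3√ε-well-supported Nash equilibrium, and satisfies supp(x') ⊆ √ε-BR₁(y), supp(y') ⊆ √ε-BR₂(x). -/
open Finset Classical

def InSimplex {n : ℕ} (x : Fin n → ℝ) : Prop :=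
  (∀ i, 0 ≤ x i) ∧ ∑ i, x i = 1

def IsApproxNE {n : ℕ} (R C : Matrix (Fin n) (Fin n) ℝ) (ε : ℝ)
    (x y : Fin n → ℝ) : Prop :=
  (∀ i, ∑ j, R i j * y j - ε ≤ ∑ i, ∑ j, x i * R i j * y j) ∧
  (∀ j, ∑ i, x i * C i j - ε ≤ ∑ i, ∑ j, x i * C i j * y j)

def IsWNE {n : ℕ} (R C : Matrix (Fin n) (Fin n) ℝ) (ε : ℝ)
    (x y : Fin n → ℝ) : Prop :=
  (∀ i, 0 < x i → ∀ k, ∑ j, R k j * y j - ε ≤ ∑ j, R i j * y j) ∧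
  (∀ j, 0 < y j → ∀ k, ∑ i, x i * C i k - ε ≤ ∑ i, x i * C i j)

def InBR1 {n : ℕ} (R : Matrix (Fin n) (Fin n) ℝ) (δ : ℝ) (y : Fin n → ℝ)
    (i : Fin n) : Prop :=
  ∀ k, ∑ j, R k j * y j - δ ≤ ∑ j, R i j * y j

def InBR2 {n : ℕ} (C : Matrix (Fin n) (Fin n) ℝ) (δ : ℝ) (x : Fin n → ℝ)
    (j : Fin n) : Prop :=
  ∀ k, ∑ i, x i * C i k - δ ≤ ∑ i, x i * C i j

/-! By Markov's inequality, an ε-approximate equilibrium puts mass at most √ε on the pure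
strategies that are not √ε-best responses. Moving that mass onto the best responses changes each
opponent payoff, which lies in `[0, 1]`, by at most √ε, so every √ε-best response to the old
strategy is a (√ε + 2√ε)-best response to the new one. -/

open Matrix

section ApproxArgmax

variable {ι : Type*}

def IsApproxArgmax (u : ι → ℝ) (δ : ℝ) (i : ι) : Prop :=
  ∀ k, u k - δ ≤ u i

lemma exists_isApproxArgmax [Finite ι] [Nonempty ι] (u : ι → ℝ) {δ : ℝ} (hδ : 0 ≤ δ) :
    ∃ i, IsApproxArgmax u δ i := by
  obtain ⟨i, hi⟩ := Finite.exists_max u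
  exact ⟨i, fun k => by linarith [hi k]⟩

lemma IsApproxArgmax.of_abs_sub_le {u u' : ι → ℝ} {δ η : ℝ} {i : ι}
    (hi : IsApproxArgmax u δ i) (hu : ∀ k, |u' k - u k| ≤ η) :
    IsApproxArgmax u' (δ + 2 * η) i := by
  intro k
  have hk := abs_le.mp (hu k)
  have hi' := abs_le.mp (hu i)
  linarith [hi k]

/-- Markov's inequality; the strict gap keeps it valid for `δ = 0`. -/
lemma sum_le_of_sum_mul_le_sq {s : Finset ι} {x g : ι → ℝ} {δ : ℝ} (hx : ∀ i, 0 ≤ x i)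
    (hδ : 0 ≤ δ) (hgap : ∀ i ∈ s, δ < g i) (hsum : ∑ i ∈ s, x i * g i ≤ δ ^ 2) :
    ∑ i ∈ s, x i ≤ δ := by
  by_contra! hlt
  obtain ⟨i, his, hxi⟩ : ∃ i ∈ s, 0 < x i :=
    exists_lt_of_sum_lt (by simpa using hδ.trans_lt hlt)
  have hstrict : ∑ i ∈ s, x i * δ < ∑ i ∈ s, x i * g i :=
    sum_lt_sum (fun j hj => mul_le_mul_of_nonneg_left (hgap j hj).le (hx j))
      ⟨i, his, mul_lt_mul_of_pos_left (hgap i his) hxi⟩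
  rw [← sum_mul] at hstrict
  nlinarith

lemma sum_filter_not_isApproxArgmax_sqrt_le [Fintype ι] [Nonempty ι] {x u : ι → ℝ} {ε : ℝ}
    (hx : x ∈ stdSimplex ℝ ι) (hregret : ∀ i, u i - ε ≤ x ⬝ᵥ u) :
    ∑ i ∈ univ.filter (¬ IsApproxArgmax u √ε ·), x i ≤ √ε := by
  obtain ⟨m, hm⟩ := Finite.exists_max u
  have hgap : ∀ i ∈ univ.filter (¬ IsApproxArgmax u √ε ·), √ε < u m - u i := by
    intro i hi
    obtain ⟨k, hk⟩ : ∃ k, u i + √ε < u k := by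
      simpa [IsApproxArgmax] using (mem_filter.mp hi).2
    linarith [hm k]
  refine sum_le_of_sum_mul_le_sq hx.1 (Real.sqrt_nonneg ε) hgap ?_
  have hregret_sum : ∑ i, x i * (u m - u i) = u m - x ⬝ᵥ u := by
    simp only [mul_sub, sum_sub_distrib, ← sum_mul, hx.2, one_mul, dotProduct]
  calc ∑ i ∈ univ.filter (¬ IsApproxArgmax u √ε ·), x i * (u m - u i)
      ≤ ∑ i, x i * (u m - u i) :=
        sum_le_sum_of_subset_of_nonneg (subset_univ _)
          fun i _ _ => mul_nonneg (hx.1 i) (by linarith [hm i])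
    _ ≤ ε := by linarith [hregret m]
    _ ≤ √ε ^ 2 := by rw [Real.sq_sqrt']; exact le_max_left ε 0

end ApproxArgmax

section Redistribute

variable {ι : Type*} [Fintype ι]

noncomputable def redistribute (P : ι → Prop) (x : ι → ℝ) (i : ι) : ℝ :=
  if P i then x i + (∑ j ∈ univ.filter (¬ P ·), x j) / (univ.filter P).card else 0

lemma of_redistribute_pos {P : ι → Prop} {x : ι → ℝ} {i : ι} (h : 0 < redistribute P x i) :
    P i := by
  by_contra hP
  simp [redistribute, hP] at h

lemma redistribute_dotProduct (P : ι → Prop) (x v : ι → ℝ) :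
    redistribute P x ⬝ᵥ v = ∑ i ∈ univ.filter P, x i * v i +
      (∑ j ∈ univ.filter (¬ P ·), x j) / (univ.filter P).card * ∑ i ∈ univ.filter P, v i := by
  simp only [dotProduct, redistribute, ite_mul, zero_mul, ← sum_filter, mul_sum,
    ← sum_add_distrib, add_mul]

lemma redistribute_mem_stdSimplex {P : ι → Prop} {x : ι → ℝ} (hx : x ∈ stdSimplex ℝ ι)
    (hP : (univ.filter P).Nonempty) : redistribute P x ∈ stdSimplex ℝ ι := by
  refine ⟨fun i => ?_, ?_⟩
  · have hT : 0 ≤ ∑ j ∈ univ.filter (¬ P ·), x j := sum_nonneg fun j _ => hx.1 j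
    unfold redistribute
    split_ifs
    · exact add_nonneg (hx.1 i) (div_nonneg hT (Nat.cast_nonneg _))
    · exact le_rfl
  · have h := redistribute_dotProduct P x 1
    simp only [dotProduct, Pi.one_apply, mul_one, sum_const, nsmul_eq_mul] at h
    rw [h, div_mul_cancel₀ _ (Nat.cast_ne_zero.mpr hP.card_pos.ne'),
      sum_filter_add_sum_filter_not, hx.2]

lemma abs_redistribute_dotProduct_sub_le {P : ι → Prop} {x v : ι → ℝ} (hx : ∀ i, 0 ≤ x i)
    (hv : ∀ i, v i ∈ Set.Icc (0 : ℝ) 1) :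
    |redistribute P x ⬝ᵥ v - x ⬝ᵥ v| ≤ ∑ j ∈ univ.filter (¬ P ·), x j := by
  set T := ∑ j ∈ univ.filter (¬ P ·), x j
  set c : ℝ := ((univ.filter P).card : ℝ)
  have hT : 0 ≤ T := sum_nonneg fun j _ => hx j
  have hsplit : x ⬝ᵥ v = ∑ i ∈ univ.filter P, x i * v i + ∑ i ∈ univ.filter (¬ P ·), x i * v i :=
    (sum_filter_add_sum_filter_not _ _ _).symm
  have hlost_nonneg : 0 ≤ ∑ i ∈ univ.filter (¬ P ·), x i * v i :=
    sum_nonneg fun i _ => mul_nonneg (hx i) (hv i).1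
  have hlost_le : ∑ i ∈ univ.filter (¬ P ·), x i * v i ≤ T :=
    sum_le_sum fun i _ => mul_le_of_le_one_right (hx i) (hv i).2
  have hshare_nonneg : 0 ≤ T / c * ∑ i ∈ univ.filter P, v i :=
    mul_nonneg (div_nonneg hT (Nat.cast_nonneg _)) (sum_nonneg fun i _ => (hv i).1)
  have hshare_le : T / c * ∑ i ∈ univ.filter P, v i ≤ T := by
    have hv_sum : ∑ i ∈ univ.filter P, v i ≤ c := by
      simpa using sum_le_sum fun i (_ : i ∈ univ.filter P) => (hv i).2
    calc T / c * ∑ i ∈ univ.filter P, v i ≤ T / c * c :=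
          mul_le_mul_of_nonneg_left hv_sum (div_nonneg hT (Nat.cast_nonneg _))
      _ ≤ T := by
        rcases eq_or_ne c 0 with hc | hc
        · simpa [hc] using hT
        · rw [div_mul_cancel₀ _ hc]
  rw [redistribute_dotProduct, hsplit, abs_le]
  constructor <;> linarith

end Redistribute

section Matrix

variable {ι m : Type*} [Fintype ι] {P : ι → Prop}

lemma abs_mulVec_redistribute_sub_le {A : Matrix m ι ℝ} (hA : ∀ k j, A k j ∈ Set.Icc (0 : ℝ) 1)
    {y : ι → ℝ} (hy : ∀ j, 0 ≤ y j) (k : m) :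
    |(A *ᵥ redistribute P y) k - (A *ᵥ y) k| ≤ ∑ j ∈ univ.filter (¬ P ·), y j := by
  simpa only [mulVec, dotProduct_comm (A k)] using abs_redistribute_dotProduct_sub_le hy (hA k)

lemma abs_vecMul_redistribute_sub_le {A : Matrix ι m ℝ} (hA : ∀ j k, A j k ∈ Set.Icc (0 : ℝ) 1)
    {x : ι → ℝ} (hx : ∀ i, 0 ≤ x i) (k : m) :
    |(redistribute P x ᵥ* A) k - (x ᵥ* A) k| ≤ ∑ j ∈ univ.filter (¬ P ·), x j :=
  abs_redistribute_dotProduct_sub_le hx fun j => hA j k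

end Matrix

namespace IsApproxNE

variable {n : ℕ} {R C : Matrix (Fin n) (Fin n) ℝ} {ε : ℝ} {x y : Fin n → ℝ}

lemma mulVec_sub_le_dotProduct (h : IsApproxNE R C ε x y) (i : Fin n) :
    (R *ᵥ y) i - ε ≤ x ⬝ᵥ (R *ᵥ y) := by
  simpa only [dotProduct, mulVec, mul_sum, mul_assoc] using h.1 i

lemma vecMul_sub_le_dotProduct (h : IsApproxNE R C ε x y) (j : Fin n) :
    (x ᵥ* C) j - ε ≤ y ⬝ᵥ (x ᵥ* C) := by
  rw [dotProduct_comm, ← dotProduct_mulVec]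
  simpa only [dotProduct, vecMul, mulVec, mul_sum, mul_assoc] using h.2 j

end IsApproxNE

theorem approxNE_to_wne_general {n : ℕ} (hn : 0 < n)
    (R C : Matrix (Fin n) (Fin n) ℝ) (ε : ℝ)
    (hR : ∀ i j, R i j ∈ Set.Icc (0:ℝ) 1) (hC : ∀ i j, C i j ∈ Set.Icc (0:ℝ) 1)
    (x y : Fin n → ℝ) (hx : InSimplex x) (hy : InSimplex y)
    (h : IsApproxNE R C ε x y)
    (x' y' : Fin n → ℝ)
    (hx' : ∀ i, x' i =
      if InBR1 R (Real.sqrt ε) y i then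
        x i + (∑ j ∈ univ.filter (fun j => ¬ InBR1 R (Real.sqrt ε) y j), x j) /
          (univ.filter (InBR1 R (Real.sqrt ε) y)).card
      else 0)
    (hy' : ∀ j, y' j =
      if InBR2 C (Real.sqrt ε) x j then
        y j + (∑ i ∈ univ.filter (fun i => ¬ InBR2 C (Real.sqrt ε) x i), y i) /
          (univ.filter (InBR2 C (Real.sqrt ε) x)).card
      else 0) :
    InSimplex x' ∧ InSimplex y' ∧
    IsWNE R C (3 * Real.sqrt ε) x' y' ∧
    (∀ i, 0 < x' i → InBR1 R (Real.sqrt ε) y i) ∧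
    (∀ j, 0 < y' j → InBR2 C (Real.sqrt ε) x j) := by
  have : Nonempty (Fin n) := Fin.pos_iff_nonempty.mp hn
  obtain rfl : x' = redistribute (InBR1 R √ε y) x := funext hx'
  obtain rfl : y' = redistribute (InBR2 C √ε x) y := funext hy'
  have hx_out : ∑ i ∈ univ.filter (¬ InBR1 R √ε y ·), x i ≤ √ε :=
    sum_filter_not_isApproxArgmax_sqrt_le (u := R *ᵥ y) hx h.mulVec_sub_le_dotProduct
  have hy_out : ∑ j ∈ univ.filter (¬ InBR2 C √ε x ·), y j ≤ √ε :=
    sum_filter_not_isApproxArgmax_sqrt_le (u := x ᵥ* C) hy h.vecMul_sub_le_dotProduct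
  obtain ⟨i₀, hi₀⟩ := exists_isApproxArgmax (R *ᵥ y) (Real.sqrt_nonneg ε)
  obtain ⟨j₀, hj₀⟩ := exists_isApproxArgmax (x ᵥ* C) (Real.sqrt_nonneg ε)
  have h3 : 3 * √ε = √ε + 2 * √ε := by ring
  refine ⟨redistribute_mem_stdSimplex hx ⟨i₀, mem_filter.mpr ⟨mem_univ _, hi₀⟩⟩,
    redistribute_mem_stdSimplex hy ⟨j₀, mem_filter.mpr ⟨mem_univ _, hj₀⟩⟩,
    ⟨fun i hi => ?_, fun j hj => ?_⟩, fun i => of_redistribute_pos, fun j => of_redistribute_pos⟩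
  · rw [h3]
    exact (of_redistribute_pos hi : IsApproxArgmax (R *ᵥ y) √ε i).of_abs_sub_le
      fun k => (abs_mulVec_redistribute_sub_le hR hy.1 k).trans hy_out
  · rw [h3]
    exact (of_redistribute_pos hj : IsApproxArgmax (x ᵥ* C) √ε j).of_abs_sub_le
      fun k => (abs_vecMul_redistribute_sub_le hC hx.1 k).trans hx_out

/-- redistributing the mass placed outside the √ε-best-response
sets uniformly over those sets turns an ε-approximate NE into a 3√ε-WNE,
supported inside the √ε-best-response sets. -/
theorem approxNE_to_wne {n : ℕ} (hn : 0 < n)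
    (R C : Matrix (Fin n) (Fin n) ℝ) (ε : ℝ) (hε : 0 ≤ ε)
    (hR : ∀ i j, R i j ∈ Set.Icc (0:ℝ) 1) (hC : ∀ i j, C i j ∈ Set.Icc (0:ℝ) 1)
    (x y : Fin n → ℝ) (hx : InSimplex x) (hy : InSimplex y)
    (h : IsApproxNE R C ε x y)
    (x' y' : Fin n → ℝ)
    (hx' : ∀ i, x' i =
      if InBR1 R (Real.sqrt ε) y i then
        x i + (∑ j ∈ univ.filter (fun j => ¬ InBR1 R (Real.sqrt ε) y j), x j) /
          (univ.filter (InBR1 R (Real.sqrt ε) y)).card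
      else 0)
    (hy' : ∀ j, y' j =
      if InBR2 C (Real.sqrt ε) x j then
        y j + (∑ i ∈ univ.filter (fun i => ¬ InBR2 C (Real.sqrt ε) x i), y i) /
          (univ.filter (InBR2 C (Real.sqrt ε) x)).card
      else 0) :
    InSimplex x' ∧ InSimplex y' ∧
    IsWNE R C (3 * Real.sqrt ε) x' y' ∧
    (∀ i, 0 < x' i → InBR1 R (Real.sqrt ε) y i) ∧
    (∀ j, 0 < y' j → InBR2 C (Real.sqrt ε) x j) :=
  approxNE_to_wne_general hn R C ε hR hC x y hx hy h x' y' hx' hy'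
end

section
/- If a graph G on n vertices has an independent set S of size k, then in the (2n+1)×(2n+1) game (R, C) constructed from G (with γ = 1/2), the symmetric profile (x, x) with x = (u_{n,S}, 0_{n+1}) is a Nash equilibrium in which both players receive payoff 1 + 1/(2k). -/
open Finset Matrix

/-- The (2n+1)-element strategy set: n vertex strategies, n auxiliary
strategies, and one final strategy. -/
abbrev Strat (n : ℕ) := Fin n ⊕ (Fin n ⊕ Unit)

/-- The row-payoff matrix of the Gilboa–Zemel-style game built from a graph
with adjacency matrix E, with γ = 1/2, blocks A = 1 − E + γI, B = −M·I,
B' = (k+γ)·I, last column −1, last row 1 + γ/k, bottom-right entry 1. -/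
noncomputable def Rmat (n k : ℕ) (E : Matrix (Fin n) (Fin n) ℝ) (M : ℝ) :
    Matrix (Strat n) (Strat n) ℝ := fun i j =>
  match i, j with
  | .inl u, .inl v => 1 - E u v + (1/2) * (if u = v then 1 else 0)
  | .inl u, .inr (.inl v) => -M * (if u = v then 1 else 0)
  | .inl _, .inr (.inr _) => -1
  | .inr (.inl u), .inl v => ((k : ℝ) + 1/2) * (if u = v then 1 else 0)
  | .inr (.inl _), .inr (.inl _) => 0
  | .inr (.inl _), .inr (.inr _) => -1
  | .inr (.inr _), .inl _ => 1 + (1/2) / (k : ℝ)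
  | .inr (.inr _), .inr (.inl _) => 1 + (1/2) / (k : ℝ)
  | .inr (.inr _), .inr (.inr _) => 1

/-- The strategy u_{n,S} padded with zeros: mass 1/k on each vertex of S. -/
noncomputable def xS (n k : ℕ) (S : Finset (Fin n)) : Strat n → ℝ := fun i =>
  match i with
  | .inl u => if u ∈ S then 1 / (k : ℝ) else 0
  | .inr _ => 0

/-!
Against `x`, a pure strategy `i` earns `(1/k) ∑_{v ∈ S} R i v`. These partial row sums are
at most `k + 1/2` for every row: a vertex row loses one unit per neighbour in `S` and gains the
`γ = 1/2` bonus only on `S`, an auxiliary row collects `k + γ` only on its own vertex, and the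
last row collects `k (1 + γ/k) = k + γ`. On the rows of `S` the bound is attained because `S` is
independent, so `x` is a best response to itself with value `(k + 1/2)/k = 1 + 1/(2k)`. Since the
game is symmetric, the column player's deviations are the row player's.
-/

section SymmetricGame

variable {ι α : Type*} [Fintype ι] [CommSemiring α]

theorem sum_sum_mul_mul_eq_dotProduct_mulVec (A : Matrix ι ι α) (x y : ι → α) :
    ∑ i, ∑ j, x i * A i j * y j = x ⬝ᵥ (A *ᵥ y) := by
  simp only [dotProduct, mulVec, mul_sum, mul_assoc]

theorem sum_mul_transpose_apply (A : Matrix ι ι α) (x : ι → α) (j : ι) :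
    ∑ i, x i * Aᵀ i j = (A *ᵥ x) j := by
  rw [← vecMul_transpose]
  rfl

theorem dotProduct_transpose_mulVec_self (A : Matrix ι ι α) (x : ι → α) :
    x ⬝ᵥ (Aᵀ *ᵥ x) = x ⬝ᵥ (A *ᵥ x) := by
  rw [mulVec_transpose, dotProduct_comm, dotProduct_mulVec]

end SymmetricGame

section Construction

variable {n k : ℕ} (S : Finset (Fin n))

theorem dotProduct_xS (w : Strat n → ℝ) :
    xS n k S ⬝ᵥ w = (∑ u ∈ S, w (.inl u)) / k := by
  simp only [dotProduct, Fintype.sum_sum_type, xS, ite_mul, zero_mul, sum_const_zero,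
    add_zero, sum_ite_mem, univ_inter, one_div_mul_eq_div, ← sum_div]

theorem mulVec_xS_apply (A : Matrix (Strat n) (Strat n) ℝ) (i : Strat n) :
    (A *ᵥ xS n k S) i = (∑ v ∈ S, A i (.inl v)) / k := by
  rw [mulVec, dotProduct_comm, dotProduct_xS]

variable (E : Matrix (Fin n) (Fin n) ℝ) (M : ℝ)

theorem sum_Rmat_vertex_row (hcard : S.card = k) (u : Fin n) :
    ∑ v ∈ S, Rmat n k E M (.inl u) (.inl v) =
      k - ∑ v ∈ S, E u v + if u ∈ S then 1 / 2 else 0 := by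
  simp only [Rmat, mul_ite, mul_one, mul_zero, sum_add_distrib, sum_sub_distrib, sum_const,
    hcard, nsmul_eq_mul, sum_ite_eq]

theorem sum_Rmat_auxiliary_row (u : Fin n) :
    ∑ v ∈ S, Rmat n k E M (.inr (.inl u)) (.inl v) =
      if u ∈ S then (k : ℝ) + 1 / 2 else 0 := by
  simp only [Rmat, mul_ite, mul_one, mul_zero, sum_ite_eq]

theorem sum_Rmat_last_row (hcard : S.card = k) (hk : 0 < k) (t : Unit) :
    ∑ v ∈ S, Rmat n k E M (.inr (.inr t)) (.inl v) = k + 1 / 2 := by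
  simp only [Rmat, sum_const, hcard, nsmul_eq_mul]
  field_simp

theorem sum_Rmat_le (hcard : S.card = k) (hk : 0 < k) (hE : ∀ u v, 0 ≤ E u v) (i : Strat n) :
    ∑ v ∈ S, Rmat n k E M i (.inl v) ≤ k + 1 / 2 := by
  rcases i with u | u | t
  · have : 0 ≤ ∑ v ∈ S, E u v := sum_nonneg fun v _ => hE u v
    rw [sum_Rmat_vertex_row S E M hcard]
    split_ifs <;> linarith
  · rw [sum_Rmat_auxiliary_row]
    split_ifs
    exacts [le_rfl, by positivity]
  · rw [sum_Rmat_last_row S E M hcard hk]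

theorem sum_Rmat_of_mem (hcard : S.card = k) (hind : ∀ u ∈ S, ∀ v ∈ S, E u v = 0)
    {u : Fin n} (hu : u ∈ S) :
    ∑ v ∈ S, Rmat n k E M (.inl u) (.inl v) = k + 1 / 2 := by
  rw [sum_Rmat_vertex_row S E M hcard, sum_eq_zero (hind u hu), if_pos hu, sub_zero]

theorem xS_dotProduct_Rmat_mulVec_xS (hcard : S.card = k) (hk : 0 < k)
    (hind : ∀ u ∈ S, ∀ v ∈ S, E u v = 0) :
    xS n k S ⬝ᵥ (Rmat n k E M *ᵥ xS n k S) = 1 + 1 / (2 * k) := by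
  have hk' : (k : ℝ) ≠ 0 := by positivity
  rw [dotProduct_xS, sum_congr rfl fun u hu => by
    rw [mulVec_xS_apply, sum_Rmat_of_mem S E M hcard hind hu], sum_const, hcard, nsmul_eq_mul]
  field_simp

end Construction

theorem independentSet_gives_NE_general {n k : ℕ} (hk : 0 < k)
    (E : Matrix (Fin n) (Fin n) ℝ) (M : ℝ)
    (hE01 : ∀ u v, E u v = 0 ∨ E u v = 1)
    (S : Finset (Fin n)) (hcard : S.card = k)
    (hind : ∀ u ∈ S, ∀ v ∈ S, E u v = 0) :
    ((∑ i, ∑ j, xS n k S i * Rmat n k E M i j * xS n k S j) = 1 + 1 / (2 * k)) ∧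
    (∀ i, (∑ j, Rmat n k E M i j * xS n k S j)
        ≤ ∑ i, ∑ j, xS n k S i * Rmat n k E M i j * xS n k S j) ∧
    (∀ j, (∑ i, xS n k S i * (Rmat n k E M)ᵀ i j)
        ≤ ∑ i, ∑ j, xS n k S i * (Rmat n k E M)ᵀ i j * xS n k S j) := by
  have hE : ∀ u v, 0 ≤ E u v := fun u v => by rcases hE01 u v with h | h <;> simp [h]
  have hvalue := xS_dotProduct_Rmat_mulVec_xS S E M hcard hk hind
  have hbest (i : Strat n) : (Rmat n k E M *ᵥ xS n k S) i ≤ 1 + 1 / (2 * k) := by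
    have hk' : (0 : ℝ) < k := by exact_mod_cast hk
    calc (Rmat n k E M *ᵥ xS n k S) i ≤ (k + 1 / 2) / k := by
          rw [mulVec_xS_apply]
          exact div_le_div_of_nonneg_right (sum_Rmat_le S E M hcard hk hE i) hk'.le
      _ = 1 + 1 / (2 * k) := by field_simp
  rw [sum_sum_mul_mul_eq_dotProduct_mulVec, sum_sum_mul_mul_eq_dotProduct_mulVec,
    dotProduct_transpose_mulVec_self, hvalue]
  refine ⟨rfl, hbest, fun j => ?_⟩
  rw [sum_mul_transpose_apply]
  exact hbest j

/-- if G has an independent set S of size k, then (x, x) with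
x = (u_{n,S}, 0) is a Nash equilibrium of the symmetric game (R, Rᵀ), and both
players receive payoff 1 + 1/(2k). -/
theorem independentSet_gives_NE {n k : ℕ} (hk : 0 < k)
    (E : Matrix (Fin n) (Fin n) ℝ) (M : ℝ)
    (hE01 : ∀ u v, E u v = 0 ∨ E u v = 1) (hdiag : ∀ u, E u u = 0)
    (S : Finset (Fin n)) (hcard : S.card = k)
    (hind : ∀ u ∈ S, ∀ v ∈ S, E u v = 0) :
    ((∑ i, ∑ j, xS n k S i * Rmat n k E M i j * xS n k S j) = 1 + 1 / (2 * k)) ∧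
    (∀ i, (∑ j, Rmat n k E M i j * xS n k S j)
        ≤ ∑ i, ∑ j, xS n k S i * Rmat n k E M i j * xS n k S j) ∧
    (∀ j, (∑ i, xS n k S i * (Rmat n k E M)ᵀ i j)
        ≤ ∑ i, ∑ j, xS n k S i * (Rmat n k E M)ᵀ i j * xS n k S j) :=
  independentSet_gives_NE_general hk E M hE01 S hcard hind
end
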